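/- arXiv:2412.11647 — 9 statements merged into one kernel-verified Lean document; each statement's English description precedes it below -/
import Mathlib

section
/- (Proposition 4, mathematical core.) Let λ ≥ 0 and let S_out be a nonempty subset of V that maximizes H_λ over all nonempty subsets of V, and suppose c(S_out) ≥ θ. Then for every nonempty subset S ⊆ V with c(S) ≥ θ, d(S_out) ≥ d(S) − λ·(c(S_out) − θ); in particular d(S_out) ≥ OPT − λ·(c(S_out) − θ), where OPT is the maximum density over all nonempty feasible subsets. -/
/-- The number of edges of `G` with both endpoints in `S`, divided by `|S|`. -/
noncomputable def density {V : Type*} (G : SimpleGraph V) (S : Finset V) : ℝ :=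
  ({e ∈ G.edgeSet | ∀ v ∈ e, v ∈ S} : Set (Sym2 V)).ncard / S.card

/-- The average agreement value over `S`. -/
noncomputable def agreement {V : Type*} (c : V → ℝ) (S : Finset V) : ℝ :=
  (∑ v ∈ S, c v) / S.card

/-- The Lagrangian objective `H_λ(S) = d(S) + λ (c(S) - θ)`. -/
noncomputable def Hval {V : Type*} (G : SimpleGraph V) (c : V → ℝ) (θ l : ℝ)
    (S : Finset V) : ℝ :=
  density G S + l * (agreement c S - θ)

theorem qLagrange_aposteriori_general {V : Type*}
    (G : SimpleGraph V) (c : V → ℝ) (θ : ℝ)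
    (l : ℝ) (hl : 0 ≤ l) (Sout : Finset V)
    (hopt : ∀ S : Finset V, S.Nonempty → Hval G c θ l S ≤ Hval G c θ l Sout) :
    ∀ S : Finset V, S.Nonempty → θ ≤ agreement c S →
      density G S - l * (agreement c Sout - θ) ≤ density G Sout := by
  intro S hS hSfeas
  have hpenalty : 0 ≤ l * (agreement c S - θ) := mul_nonneg hl (sub_nonneg.2 hSfeas)
  have hmax : Hval G c θ l S ≤ Hval G c θ l Sout := hopt S hS
  rw [Hval, Hval] at hmax
  linarith

/-- Proposition 4 (mathematical core): if `S_out` maximizes `H_λ` over nonempty subsets and is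
feasible, then its density is within additive `λ (c(S_out) - θ)` of the optimum of Q-DISCO. -/
theorem qLagrange_aposteriori {V : Type*} [Fintype V] [Nonempty V]
    (G : SimpleGraph V) (c : V → ℝ) (θ : ℝ)
    (l : ℝ) (hl : 0 ≤ l) (Sout : Finset V) (hSout : Sout.Nonempty)
    (hopt : ∀ S : Finset V, S.Nonempty → Hval G c θ l S ≤ Hval G c θ l Sout)
    (hfeas : θ ≤ agreement c Sout) :
    ∀ S : Finset V, S.Nonempty → θ ≤ agreement c S →
      density G S - l * (agreement c Sout - θ) ≤ density G Sout :=
  qLagrange_aposteriori_general G c θ l hl Sout hopt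
end

section
/- Let z₂ ≥ 0 and ℓ ∈ ℝ. Suppose that every nonempty subset S ⊆ V contains at least one node v with deg_S(v) + z₂(c_v − θ) ≤ ℓ. Then every nonempty subset S ⊆ V with c(S) ≥ θ satisfies d(S) ≤ ℓ. (This is the load-balancing upper bound underlying the greedy peeling algorithm: the maximum over peeling prefixes of the minimum load upper-bounds the optimal value of Q-DISCO.) -/
/-- The degree of `v` in the subgraph of `G` induced by `S`. -/
noncomputable def degIn {V : Type*} (G : SimpleGraph V) (S : Finset V) (v : V) : ℕ :=
  ({u : V | u ∈ S ∧ G.Adj v u}).ncard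

lemma edge_split {V : Type*} [Fintype V] [DecidableEq V] (G : SimpleGraph V) (S : Finset V) {v : V}
    (hv : v ∈ S) :
    ({e ∈ G.edgeSet | ∀ w ∈ e, w ∈ S} : Set (Sym2 V)).ncard
      = ({e ∈ G.edgeSet | ∀ w ∈ e, w ∈ S.erase v} : Set (Sym2 V)).ncard + degIn G S v := by
  classical
  set A : Set (Sym2 V) := {e ∈ G.edgeSet | ∀ w ∈ e, w ∈ S} with hA
  set B : Set (Sym2 V) := {e ∈ G.edgeSet | ∀ w ∈ e, w ∈ S.erase v} with hB
  set C : Set (Sym2 V) := {e | e ∈ G.edgeSet ∧ v ∈ e ∧ ∀ w ∈ e, w ∈ S} with hC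
  have hABC : A = B ∪ C := by
    ext e
    constructor
    · rintro ⟨he, hS⟩
      by_cases hve : v ∈ e
      · exact Or.inr ⟨he, hve, hS⟩
      · exact Or.inl ⟨he, fun w hw => Finset.mem_erase.mpr
          ⟨fun h => hve (h ▸ hw), hS w hw⟩⟩
    · rintro (⟨he, hS⟩ | ⟨he, _, hS⟩)
      · exact ⟨he, fun w hw => Finset.mem_of_mem_erase (hS w hw)⟩
      · exact ⟨he, hS⟩
  have hdisj : Disjoint B C := by
    rw [Set.disjoint_left]
    rintro e ⟨_, hS⟩ ⟨_, hve, _⟩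
    exact absurd (hS v hve) (Finset.notMem_erase v S)
  have hCdeg : C.ncard = degIn G S v := by
    have himg : C = (fun u => s(v, u)) '' {u : V | u ∈ S ∧ G.Adj v u} := by
      ext e
      constructor
      · rintro ⟨he, hve, hS⟩
        refine ⟨Sym2.Mem.other hve, ⟨hS _ (Sym2.other_mem hve), ?_⟩, Sym2.other_spec hve⟩
        have := (Sym2.other_spec hve) ▸ he
        exact (SimpleGraph.mem_edgeSet G).mp this
      · rintro ⟨u, ⟨huS, hadj⟩, rfl⟩
        refine ⟨(SimpleGraph.mem_edgeSet G).mpr hadj, Sym2.mem_mk_left v u, ?_⟩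
        intro w hw
        rcases Sym2.mem_iff.mp hw with rfl | rfl
        · exact hv
        · exact huS
    rw [himg, Set.ncard_image_of_injOn, degIn]
    intro a _ b _ h
    exact (Sym2.congr_right).mp h
  rw [hABC, Set.ncard_union_eq hdisj (Set.toFinite B) (Set.toFinite C), hCdeg]

lemma key_bound {V : Type*} [Fintype V]
    (G : SimpleGraph V) (c : V → ℝ) (θ : ℝ) (z2 ℓ : ℝ)
    (hpeel : ∀ S : Finset V, S.Nonempty →
      ∃ v ∈ S, (degIn G S v : ℝ) + z2 * (c v - θ) ≤ ℓ) :
    ∀ (n : ℕ) (S : Finset V), S.card = n →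
      (({e ∈ G.edgeSet | ∀ w ∈ e, w ∈ S} : Set (Sym2 V)).ncard : ℝ)
        + z2 * ∑ v ∈ S, (c v - θ) ≤ ℓ * S.card := by
  classical
  intro n
  induction n with
  | zero =>
    intro S hS
    rw [Finset.card_eq_zero] at hS
    subst hS
    have hempty : ({e ∈ G.edgeSet | ∀ w ∈ e, w ∈ (∅ : Finset V)} : Set (Sym2 V)) = ∅ := by
      ext e
      simp only [Set.mem_setOf_eq, Set.mem_empty_iff_false, iff_false, not_and]
      intro _ h
      induction e with
      | h a b => exact absurd (h a (Sym2.mem_mk_left a b)) (Finset.notMem_empty a)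
    rw [hempty]
    simp
  | succ n ih =>
    intro S hS
    have hne : S.Nonempty := Finset.card_pos.mp (hS ▸ Nat.succ_pos n)
    obtain ⟨v, hv, hload⟩ := hpeel S hne
    have hcard : (S.erase v).card = n := by
      rw [Finset.card_erase_of_mem hv, hS]; rfl
    have hIH := ih (S.erase v) hcard
    have hsum : ∑ w ∈ S.erase v, (c w - θ) + (c v - θ) = ∑ w ∈ S, (c w - θ) :=
      Finset.sum_erase_add S _ hv
    have hsplit := edge_split G S hv
    rw [hsplit, hS]
    rw [hcard] at hIH
    push_cast
    push_cast at hIH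
    rw [← hsum, mul_add]
    linarith

/-- Load-balancing upper bound: if every nonempty subset contains a node of load at most `ℓ`,
then every nonempty feasible subset has density at most `ℓ`. -/
theorem load_upper_bound {V : Type*} [Fintype V]
    (G : SimpleGraph V) (c : V → ℝ) (θ : ℝ) (z2 ℓ : ℝ) (hz2 : 0 ≤ z2)
    (hpeel : ∀ S : Finset V, S.Nonempty →
      ∃ v ∈ S, (degIn G S v : ℝ) + z2 * (c v - θ) ≤ ℓ) :
    ∀ S : Finset V, S.Nonempty → θ ≤ agreement c S → density G S ≤ ℓ := by
  intro S hne hagr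
  have hcard : (0 : ℝ) < S.card := by
    exact_mod_cast Finset.card_pos.mpr hne
  have hkey := key_bound G c θ z2 ℓ hpeel S.card S rfl
  have hsum : (0 : ℝ) ≤ ∑ v ∈ S, (c v - θ) := by
    have : θ * S.card ≤ ∑ v ∈ S, c v := by
      rw [agreement] at hagr
      calc θ * S.card ≤ ((∑ v ∈ S, c v) / S.card) * S.card := by
            exact mul_le_mul_of_nonneg_right hagr (le_of_lt hcard)
        _ = ∑ v ∈ S, c v := by field_simp
    rw [Finset.sum_sub_distrib, Finset.sum_const, nsmul_eq_mul]
    linarith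
  rw [density, div_le_iff₀ hcard]
  nlinarith [mul_nonneg hz2 hsum]
end

section
/- (Proposition 5, combinatorial form.) Let z₂ ≥ 0, ℓ ∈ ℝ, and let T ⊆ V be a nonempty subset such that (i) deg_T(v) + z₂(c_v − θ) ≥ ℓ for every v ∈ T, and (ii) every nonempty subset S ⊆ V contains a node v with deg_S(v) + z₂(c_v − θ) ≤ ℓ. Then for every nonempty subset S ⊆ V with c(S) ≥ θ, d(T) ≥ d(S)/2 − (z₂/2)·(c(T) − θ); that is, d(T) ≥ OPT/2 − (z₂/2)·(c(T) − θ), where OPT is the maximum density over all nonempty feasible subsets. -/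
/-!
Call `deg_S(v) + z₂(c_v - θ)` the load of `v` in `S`. Hypothesis (ii) lets us peel any `S` down
to `∅`, removing at each step a vertex of load at most `ℓ`; the loads of the removed vertices
add up to `|E(S)| + z₂ ∑_{v ∈ S} (c_v - θ)`, so `d(S) + z₂(c(S) - θ) ≤ ℓ`, and `d(S) ≤ ℓ` when `S`
is feasible. Averaging (i) over `T` with the degree-sum formula gives
`ℓ ≤ 2 d(T) + z₂(c(T) - θ)`.
-/

namespace SimpleGraph

variable {V : Type*} (G : SimpleGraph V)

/-- The subgraph induced by `S`, kept on the whole vertex type so that `deleteIncidenceSet` and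
the degree-sum formula apply to it. -/
def restrict (S : Set V) : SimpleGraph V where
  Adj u v := G.Adj u v ∧ u ∈ S ∧ v ∈ S
  symm := ⟨fun _ _ h => ⟨h.1.symm, h.2.2, h.2.1⟩⟩
  loopless := ⟨fun _ h => G.irrefl h.1⟩

variable {G}

@[simp]
lemma restrict_adj {S : Set V} {u v : V} : (G.restrict S).Adj u v ↔ G.Adj u v ∧ u ∈ S ∧ v ∈ S :=
  Iff.rfl

variable (G)

@[simp]
lemma restrict_empty : G.restrict ∅ = ⊥ := by
  ext
  simp

lemma edgeSet_restrict (S : Set V) :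
    (G.restrict S).edgeSet = {e ∈ G.edgeSet | ∀ v ∈ e, v ∈ S} := by
  ext e
  induction e using Sym2.ind with
  | _ a b => simp

lemma restrict_diff_singleton (S : Set V) (x : V) :
    G.restrict (S \ {x}) = (G.restrict S).deleteIncidenceSet x := by
  ext u v
  simp only [restrict_adj, deleteIncidenceSet_adj, Set.mem_sdiff, Set.mem_singleton_iff]
  tauto

lemma neighborSet_restrict_of_mem {S : Set V} {v : V} (hv : v ∈ S) :
    (G.restrict S).neighborSet v = {u | u ∈ S ∧ G.Adj v u} := by
  ext u
  simp [hv, and_comm]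

lemma neighborSet_restrict_of_notMem {S : Set V} {v : V} (hv : v ∉ S) :
    (G.restrict S).neighborSet v = ∅ := by
  ext u
  simp [hv]

lemma ncard_edgeSet_deleteIncidenceSet_add_ncard_neighborSet [Finite V] (x : V) :
    (G.deleteIncidenceSet x).edgeSet.ncard + (G.neighborSet x).ncard = G.edgeSet.ncard := by
  classical
  rw [edgeSet_deleteIncidenceSet, ← Nat.card_coe_set_eq (G.neighborSet x),
    ← Nat.card_congr (G.incidenceSetEquivNeighborSet x), Nat.card_coe_set_eq]
  exact Set.ncard_sdiff_add_ncard_of_subset (G.incidenceSet_subset x)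

lemma sum_ncard_neighborSet_eq_twice_ncard_edgeSet [Fintype V] :
    ∑ v, (G.neighborSet v).ncard = 2 * G.edgeSet.ncard := by
  classical
  simp only [Set.ncard_eq_toFinset_card']
  exact G.sum_degrees_eq_twice_card_edges

end SimpleGraph

section Peeling

open Finset

variable {V : Type*} (G : SimpleGraph V)

lemma degIn_eq_ncard_neighborSet_restrict {S : Finset V} {v : V} (hv : v ∈ S) :
    degIn G S v = ((G.restrict S).neighborSet v).ncard := by
  rw [G.neighborSet_restrict_of_mem (mem_coe.2 hv)]
  rfl

lemma density_eq_ncard_edgeSet_restrict_div (S : Finset V) :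
    density G S = ((G.restrict S).edgeSet.ncard : ℝ) / #S := by
  rw [density, G.edgeSet_restrict]
  rfl

lemma ncard_edgeSet_restrict_erase_add_degIn [Finite V] [DecidableEq V] {S : Finset V} {v : V}
    (hv : v ∈ S) :
    (G.restrict (S.erase v)).edgeSet.ncard + degIn G S v = (G.restrict S).edgeSet.ncard := by
  rw [coe_erase, G.restrict_diff_singleton, degIn_eq_ncard_neighborSet_restrict G hv,
    SimpleGraph.ncard_edgeSet_deleteIncidenceSet_add_ncard_neighborSet]

lemma sum_degIn [Fintype V] (S : Finset V) :
    ∑ v ∈ S, degIn G S v = 2 * (G.restrict S).edgeSet.ncard := by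
  rw [← SimpleGraph.sum_ncard_neighborSet_eq_twice_ncard_edgeSet, ← sum_subset (subset_univ S)]
  · exact sum_congr rfl fun v hv => degIn_eq_ncard_neighborSet_restrict G hv
  · intro v _ hv
    rw [G.neighborSet_restrict_of_notMem (by simpa using hv), Set.ncard_empty]

theorem ncard_edgeSet_restrict_add_sum_le [Finite V] {w : V → ℝ} {ℓ : ℝ}
    (hpeel : ∀ S : Finset V, S.Nonempty → ∃ v ∈ S, (degIn G S v : ℝ) + w v ≤ ℓ)
    (S : Finset V) : ((G.restrict S).edgeSet.ncard : ℝ) + ∑ v ∈ S, w v ≤ ℓ * #S := by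
  classical
  induction S using Finset.strongInduction with
  | H S ih =>
    rcases S.eq_empty_or_nonempty with rfl | hS
    · simp
    obtain ⟨v, hv, hload⟩ := hpeel S hS
    have hrest := ih _ (erase_ssubset hv)
    have hedges : ((G.restrict S).edgeSet.ncard : ℝ) =
        (G.restrict (S.erase v)).edgeSet.ncard + degIn G S v :=
      mod_cast (ncard_edgeSet_restrict_erase_add_degIn G hv).symm
    rw [hedges, ← add_sum_erase S w hv, ← card_erase_add_one hv, Nat.cast_succ]
    linarith

lemma sum_sub_eq_agreement_sub_mul_card (c : V → ℝ) (θ : ℝ) {S : Finset V} (hS : S.Nonempty) :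
    ∑ v ∈ S, (c v - θ) = (agreement c S - θ) * #S := by
  have hcard : (#S : ℝ) ≠ 0 := Nat.cast_ne_zero.2 hS.card_pos.ne'
  rw [sum_sub_distrib, sum_const, nsmul_eq_mul, agreement, sub_mul, div_mul_cancel₀ _ hcard,
    mul_comm]

lemma density_mul_card {S : Finset V} (hS : S.Nonempty) :
    density G S * #S = (G.restrict S).edgeSet.ncard := by
  rw [density_eq_ncard_edgeSet_restrict_div,
    div_mul_cancel₀ _ (Nat.cast_ne_zero.2 hS.card_pos.ne')]

variable {G} {c : V → ℝ} {θ z2 ℓ : ℝ}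

theorem density_add_le_of_forall_exists_load_le [Finite V]
    (hpeel : ∀ S : Finset V, S.Nonempty → ∃ v ∈ S, (degIn G S v : ℝ) + z2 * (c v - θ) ≤ ℓ)
    {S : Finset V} (hS : S.Nonempty) : density G S + z2 * (agreement c S - θ) ≤ ℓ := by
  have hbound := ncard_edgeSet_restrict_add_sum_le G hpeel S
  rw [← mul_sum, sum_sub_eq_agreement_sub_mul_card c θ hS, ← density_mul_card G hS] at hbound
  exact le_of_mul_le_mul_right (by linarith) (Nat.cast_pos.2 hS.card_pos)

theorem le_two_mul_density_add_of_forall_le_load [Fintype V] {T : Finset V} (hT : T.Nonempty)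
    (hload : ∀ v ∈ T, ℓ ≤ (degIn G T v : ℝ) + z2 * (c v - θ)) :
    ℓ ≤ 2 * density G T + z2 * (agreement c T - θ) := by
  have hsum := card_nsmul_le_sum T _ ℓ hload
  rw [nsmul_eq_mul, sum_add_distrib, ← Nat.cast_sum, sum_degIn, ← mul_sum,
    sum_sub_eq_agreement_sub_mul_card c θ hT, Nat.cast_mul, ← density_mul_card G hT] at hsum
  exact le_of_mul_le_mul_right (by push_cast at hsum; linarith) (Nat.cast_pos.2 hT.card_pos)

end Peeling

/-- Proposition 5 (combinatorial form): if every node of the nonempty subset `T` has load at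
least `ℓ` and every nonempty subset contains a node of load at most `ℓ`, then for every
nonempty feasible subset `S`, `d(T) ≥ d(S)/2 - (z₂/2)(c(T) - θ)`. -/
theorem qPeeling_aposteriori {V : Type*} [Fintype V]
    (G : SimpleGraph V) (c : V → ℝ) (θ : ℝ) (z2 ℓ : ℝ) (hz2 : 0 ≤ z2)
    (T : Finset V) (hT : T.Nonempty)
    (hload : ∀ v ∈ T, ℓ ≤ (degIn G T v : ℝ) + z2 * (c v - θ))
    (hpeel : ∀ S : Finset V, S.Nonempty →
      ∃ v ∈ S, (degIn G S v : ℝ) + z2 * (c v - θ) ≤ ℓ) :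
    ∀ S : Finset V, S.Nonempty → θ ≤ agreement c S →
      density G S / 2 - z2 / 2 * (agreement c T - θ) ≤ density G T := by
  intro S hS hfeas
  have hS_le := density_add_le_of_forall_exists_load_le hpeel hS
  have hT_ge := le_two_mul_density_add_of_forall_le_load hT hload
  linarith [mul_nonneg hz2 (sub_nonneg.2 hfeas)]
end

section
/- Let d* = max over nonempty S ⊆ V of d(S) and c_max = max_{v∈V} c_v, and assume c_max > θ. Then for every λ > 0 with λ ≥ d*/(c_max − θ), every nonempty subset S ⊆ V maximizing H_λ over all nonempty subsets satisfies c(S) ≥ θ. (This justifies the upper endpoint λ^R = d*/(c_max − θ) of the binary search in the Q-Lagrange algorithm.) -/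
/-- If `λ > 0` and `λ ≥ d*/(c_max - θ)` (where `d*` is the maximum density over nonempty
subsets and `c_max > θ` is the maximum agreement value), then every nonempty maximizer of
`H_λ` is feasible for Q-DISCO. -/
theorem lambda_upper_endpoint_feasible {V : Type*} [Fintype V] [Nonempty V]
    (G : SimpleGraph V) (c : V → ℝ) (θ : ℝ) (dstar cmax : ℝ)
    (hdstar : IsGreatest {x : ℝ | ∃ S : Finset V, S.Nonempty ∧ x = density G S} dstar)
    (hcmax : IsGreatest (Set.range c) cmax)
    (hθ : θ < cmax)
    (l : ℝ) (hl : 0 < l) (hl' : dstar / (cmax - θ) ≤ l)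
    (S : Finset V) (hS : S.Nonempty)
    (hopt : ∀ T : Finset V, T.Nonempty → Hval G c θ l T ≤ Hval G c θ l S) :
    θ ≤ agreement c S := by
  obtain ⟨v, hv⟩ := hcmax.1
  have hpos : (0:ℝ) < cmax - θ := by linarith
  have hkey : dstar ≤ l * (cmax - θ) := by
    rw [div_le_iff₀ hpos] at hl'; linarith [hl']
  have hdS : density G S ≤ dstar := hdstar.2 ⟨S, hS, rfl⟩
  have hdenom : (0:ℝ) ≤ density G {v} := by
    unfold density
    positivity
  have hagree : agreement c {v} = c v := by
    simp [agreement]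
  have hT := hopt {v} (Finset.singleton_nonempty v)
  unfold Hval at hT
  rw [hagree, hv] at hT
  have : l * (agreement c S - θ) ≥ 0 := by nlinarith
  nlinarith
end

section
/- Suppose G has maximum degree Δ ≥ 1 and there exist u, v ∈ V with c_u ≠ c_v; let δ_min = min{|c_u − c_v| : u, v ∈ V, c_u ≠ c_v} > 0. Then for every z₂ ≥ 2Δ/δ_min, for every nonempty subset S ⊆ V, every node v ∈ S minimizing the load deg_S(v) + z₂(c_v − θ) over S satisfies c_v = min_{u∈S} c_u. Consequently, with such z₂ the greedy peeling procedure removes nodes in nondecreasing order of their agreement values. -/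
lemma degIn_le {V : Type*} [Fintype V] (G : SimpleGraph V) (S : Finset V) (v : V)
    (Δ : ℕ) (hΔmax : ∀ v : V, (G.neighborSet v).ncard ≤ Δ) : degIn G S v ≤ Δ := by
  refine le_trans ?_ (hΔmax v)
  apply Set.ncard_le_ncard
  · intro u hu; exact hu.2
  · exact Set.toFinite _

/-- With `z₂ ≥ 2Δ/δ_min`, in any nonempty subset `S` every node of minimum load has the
minimum agreement value in `S`; hence greedy peeling removes nodes in nondecreasing order of
their agreement values. -/
theorem large_z2_peels_by_agreement {V : Type*} [Fintype V]
    (G : SimpleGraph V) (c : V → ℝ) (θ : ℝ)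
    (Δ : ℕ) (hΔ : 1 ≤ Δ) (hΔmax : ∀ v : V, (G.neighborSet v).ncard ≤ Δ)
    (hne : ∃ u v : V, c u ≠ c v)
    (δmin : ℝ) (hδpos : 0 < δmin)
    (hδ : IsLeast {x : ℝ | ∃ u v : V, c u ≠ c v ∧ x = |c u - c v|} δmin)
    (z2 : ℝ) (hz2 : 2 * (Δ : ℝ) / δmin ≤ z2)
    (S : Finset V) (hS : S.Nonempty) (v : V) (hv : v ∈ S)
    (hmin : ∀ u ∈ S,
      (degIn G S v : ℝ) + z2 * (c v - θ) ≤ (degIn G S u : ℝ) + z2 * (c u - θ)) :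
    ∀ u ∈ S, c v ≤ c u := by
  intro u hu
  by_contra hlt
  push_neg at hlt
  have hne' : c v ≠ c u := ne_of_gt hlt
  have hδle : δmin ≤ |c v - c u| := hδ.2 ⟨v, u, hne', rfl⟩
  have habs : |c v - c u| = c v - c u := abs_of_pos (by linarith)
  have hgap : δmin ≤ c v - c u := by rw [← habs]; exact hδle
  have hΔpos : (0:ℝ) < Δ := by exact_mod_cast hΔ
  have hz2pos : 0 < z2 := lt_of_lt_of_le (by positivity) hz2
  have h2Δ : 2 * (Δ : ℝ) ≤ z2 * δmin := by
    rw [div_le_iff₀ hδpos] at hz2; linarith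
  have hload := hmin u hu
  have hdv : (0:ℝ) ≤ (degIn G S v : ℝ) := Nat.cast_nonneg _
  have hdu : (degIn G S u : ℝ) ≤ Δ := by exact_mod_cast degIn_le G S u Δ hΔmax
  have hz2gap : z2 * δmin ≤ z2 * (c v - c u) :=
    mul_le_mul_of_nonneg_left hgap hz2pos.le
  nlinarith
end

section
/- (Correctness of the reduction in Proposition 1.) Let G = (V, E) be a finite undirected simple graph with V nonempty and let k ≥ 1 be an integer. Form the graph G' on node set V' = V ∪ {u_1, …, u_k}, where u_1, …, u_k are k new isolated nodes, with the same edge set E. Set c_v = 0 for every v ∈ V, c_{u_i} = 1 for i = 1, …, k, and θ = 1/2. Then for every real number val ≥ 0: there exists a nonempty subset S ⊆ V with |S| ≤ k and |E(S)|/|S| ≥ val if and only if there exists a nonempty subset S' ⊆ V' with c(S') ≥ 1/2 and d(S') ≥ val/2. -/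
/-!
A subset `S'` of the extended graph splits into its old part `L = S'.toLeft` and its new part
`R = S'.toRight`. The new nodes are isolated, so `E(S') = E(L)`, and `c(S') = |R| / (|L| + |R|)`;
hence `S'` is feasible iff `|L| ≤ |R|`, which forces `|L| ≤ k` and `d(L) ≥ 2 d(S')`. Conversely,
padding `S` with `|S|` new nodes gives agreement exactly `1/2` and halves the density. When `L` is
empty, `val ≤ 2 d(S') = 0`, and any single node of `G` is a witness.
-/

open Finset

section InnerEdgeCount

variable {V W : Type*} (G : SimpleGraph V)

noncomputable def innerEdgeCount (S : Finset V) : ℕ :=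
  ({e ∈ G.edgeSet | ∀ v ∈ e, v ∈ S} : Set (Sym2 V)).ncard

lemma density_eq_innerEdgeCount_div (S : Finset V) :
    density G S = innerEdgeCount G S / #S :=
  rfl

lemma innerEdgeCount_empty : innerEdgeCount G ∅ = 0 := by
  rw [innerEdgeCount, ← Set.ncard_empty (Sym2 V)]
  congr 1
  ext e
  simpa using fun _ ↦ ⟨_, e.out_fst_mem⟩

lemma density_empty : density G ∅ = 0 := by
  simp [density_eq_innerEdgeCount_div, innerEdgeCount_empty]

lemma density_nonneg (S : Finset V) : 0 ≤ density G S := by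
  unfold density
  positivity

lemma innerEdgeCount_map {f : V → W} (hf : f.Injective) (S : Finset W) :
    innerEdgeCount (G.map f) S = innerEdgeCount G (S.preimage f hf.injOn) := by
  have hedges : {e ∈ (G.map f).edgeSet | ∀ w ∈ e, w ∈ S} =
      Sym2.map f '' {e ∈ G.edgeSet | ∀ v ∈ e, v ∈ S.preimage f hf.injOn} := by
    change (G.map f).edgeSet ∩ {e | ∀ w ∈ e, w ∈ S} =
      Sym2.map f '' (G.edgeSet ∩ {e | ∀ v ∈ e, v ∈ S.preimage f hf.injOn})
    rw [show G.map f = G.map (⟨f, hf⟩ : V ↪ W) from rfl, G.edgeSet_map, ← Set.image_inter_preimage]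
    ext e
    simp
  rw [innerEdgeCount, innerEdgeCount, hedges, Set.ncard_image_of_injective _ (Sym2.map.injective hf)]

end InnerEdgeCount

section SumType

variable {α β : Type*}

lemma sum_eq_card_toRight {c : α ⊕ β → ℝ} (hl : ∀ a, c (.inl a) = 0) (hr : ∀ b, c (.inr b) = 1)
    (S : Finset (α ⊕ β)) : ∑ x ∈ S, c x = #S.toRight := by
  simp [sum_sum_eq_sum_toLeft_add_sum_toRight, hl, hr]

lemma half_le_agreement_iff {c : α ⊕ β → ℝ} (hl : ∀ a, c (.inl a) = 0)
    (hr : ∀ b, c (.inr b) = 1) {S : Finset (α ⊕ β)} (hS : S.Nonempty) :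
    1 / 2 ≤ agreement c S ↔ #S.toLeft ≤ #S.toRight := by
  have hpos : (0 : ℝ) < #S := by exact_mod_cast hS.card_pos
  rw [agreement, sum_eq_card_toRight hl hr, le_div_iff₀ hpos, ← card_toLeft_add_card_toRight,
    ← Nat.cast_le (α := ℝ)]
  push_cast
  constructor <;> intro h <;> linarith

variable (G : SimpleGraph α)

lemma density_map_inl (S : Finset (α ⊕ β)) :
    density (G.map Sum.inl) S = innerEdgeCount G S.toLeft / #S := by
  rw [density_eq_innerEdgeCount_div, innerEdgeCount_map G Sum.inl_injective]
  congr 3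
  ext a
  simp

lemma density_map_inl_disjSum {S : Finset α} {T : Finset β} (hT : #T = #S) :
    density (G.map Sum.inl) (S.disjSum T) = density G S / 2 := by
  rw [density_map_inl, toLeft_disjSum, card_disjSum, hT, density_eq_innerEdgeCount_div]
  push_cast
  ring

lemma two_mul_density_map_inl_le {S : Finset (α ⊕ β)} (h : #S.toLeft ≤ #S.toRight) :
    2 * density (G.map Sum.inl) S ≤ density G S.toLeft := by
  rcases S.toLeft.eq_empty_or_nonempty with hL | hL
  · simp [density_map_inl, hL, innerEdgeCount_empty, density_empty]
  · have hL' : (0 : ℝ) < #S.toLeft := by exact_mod_cast hL.card_pos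
    have h' : (#S.toLeft : ℝ) ≤ #S.toRight := by exact_mod_cast h
    rw [density_map_inl, density_eq_innerEdgeCount_div, mul_div_assoc',
      ← card_toLeft_add_card_toRight, div_le_div_iff₀ (by push_cast; positivity) hL']
    push_cast
    nlinarith [(innerEdgeCount G S.toLeft).cast_nonneg (α := ℝ)]

end SumType

theorem damks_reduction_correct_general {V : Type*} [Nonempty V]
    (G : SimpleGraph V) (k : ℕ) (hk : 1 ≤ k)
    (c' : V ⊕ Fin k → ℝ)
    (hc'V : ∀ v : V, c' (Sum.inl v) = 0) (hc'new : ∀ i : Fin k, c' (Sum.inr i) = 1)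
    (val : ℝ) :
    (∃ S : Finset V, S.Nonempty ∧ S.card ≤ k ∧ val ≤ density G S) ↔
    (∃ S' : Finset (V ⊕ Fin k), S'.Nonempty ∧ (1 / 2 : ℝ) ≤ agreement c' S' ∧
      val / 2 ≤ density (G.map Sum.inl) S') := by
  constructor
  · rintro ⟨S, hS, hSk, hdense⟩
    obtain ⟨T, -, hT⟩ := exists_subset_card_eq (s := (univ : Finset (Fin k))) (by simpa using hSk)
    obtain ⟨v, hv⟩ := hS
    have hS' : (S.disjSum T).Nonempty := ⟨.inl v, inl_mem_disjSum.2 hv⟩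
    refine ⟨S.disjSum T, hS', ?_, ?_⟩
    · rw [half_le_agreement_iff hc'V hc'new hS', toLeft_disjSum, toRight_disjSum, hT]
    · rw [density_map_inl_disjSum G hT]
      linarith
  · rintro ⟨S', hS', hagree, hdense⟩
    have hcard := (half_le_agreement_iff hc'V hc'new hS').1 hagree
    have hval : val ≤ density G S'.toLeft := by linarith [two_mul_density_map_inl_le G hcard]
    by_cases hL : S'.toLeft.Nonempty
    · exact ⟨_, hL, hcard.trans ((card_le_univ _).trans_eq (Fintype.card_fin k)), hval⟩
    · rw [not_nonempty_iff_eq_empty.1 hL, density_empty] at hval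
      obtain ⟨v⟩ := ‹Nonempty V›
      exact ⟨{v}, singleton_nonempty v, by simpa using hk, hval.trans (density_nonneg G {v})⟩

/-- Correctness of the reduction from Densest at-most-k-Subgraph to Q-DISCO: extend `G` by
`k` isolated nodes of agreement `1`, give original nodes agreement `0`, and set `θ = 1/2`.
Then `G` has a nonempty subset of size at most `k` and density at least `val` iff the
extended instance has a nonempty feasible subset of density at least `val/2`. -/
theorem damks_reduction_correct {V : Type*} [Fintype V] [Nonempty V]
    (G : SimpleGraph V) (k : ℕ) (hk : 1 ≤ k)
    (c' : V ⊕ Fin k → ℝ)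
    (hc'V : ∀ v : V, c' (Sum.inl v) = 0) (hc'new : ∀ i : Fin k, c' (Sum.inr i) = 1)
    (val : ℝ) (hval : 0 ≤ val) :
    (∃ S : Finset V, S.Nonempty ∧ S.card ≤ k ∧ val ≤ density G S) ↔
    (∃ S' : Finset (V ⊕ Fin k), S'.Nonempty ∧ (1 / 2 : ℝ) ≤ agreement c' S' ∧
      val / 2 ≤ density (G.map Sum.inl) S') :=
  damks_reduction_correct_general G k hk c' hc'V hc'new val
end

section
/- Let λ* ≥ 0 satisfy J(λ*) ≤ J(μ) for every μ ≥ 0 (i.e., λ* is a minimizer of the Lagrangian dual). Then for every λ > λ*, every nonempty subset S ⊆ V that maximizes H_λ over all nonempty subsets satisfies c(S) ≥ θ. -/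
/-! The dual function `J` is a pointwise maximum of the affine functions `λ ↦ H_λ(S)`. If a
maximizer `S` at `λ` had `c(S) < θ`, its line would have negative slope, so at the dual
minimizer `λ* < λ` it would already exceed `J(λ) ≥ J(λ*)`. -/

section Lagrangian

variable {V : Type*} (G : SimpleGraph V) (c : V → ℝ) (θ : ℝ)

theorem Hval_sub_Hval (l l' : ℝ) (S : Finset V) :
    Hval G c θ l S - Hval G c θ l' S = (l - l') * (agreement c S - θ) := by
  unfold Hval
  ring

theorem le_agreement_of_Hval_le {l l' : ℝ} (hl : l' < l) {S : Finset V}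
    (hle : Hval G c θ l' S ≤ Hval G c θ l S) : θ ≤ agreement c S := by
  have hslope : 0 ≤ (l - l') * (agreement c S - θ) := by
    rw [← Hval_sub_Hval]
    exact sub_nonneg.mpr hle
  exact sub_nonneg.mp (nonneg_of_mul_nonneg_right hslope (sub_pos.mpr hl))

theorem isGreatest_Hval_of_forall_le {l : ℝ} {S : Finset V} (hS : S.Nonempty)
    (hopt : ∀ T : Finset V, T.Nonempty → Hval G c θ l T ≤ Hval G c θ l S) :
    IsGreatest {x : ℝ | ∃ T : Finset V, T.Nonempty ∧ x = Hval G c θ l T} (Hval G c θ l S) :=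
  ⟨⟨S, hS, rfl⟩, fun _ ⟨T, hT, hx⟩ => hx ▸ hopt T hT⟩

end Lagrangian

theorem feasible_above_dual_minimizer_general {V : Type*}
    (G : SimpleGraph V) (c : V → ℝ) (θ : ℝ) (J : ℝ → ℝ)
    (hJ : ∀ l : ℝ,
      IsGreatest {x : ℝ | ∃ S : Finset V, S.Nonempty ∧ x = Hval G c θ l S} (J l))
    (lstar : ℝ) (hlstar : 0 ≤ lstar) (hmin : ∀ μ : ℝ, 0 ≤ μ → J lstar ≤ J μ)
    (l : ℝ) (hl : lstar < l)
    (S : Finset V) (hS : S.Nonempty)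
    (hopt : ∀ T : Finset V, T.Nonempty → Hval G c θ l T ≤ Hval G c θ l S) :
    θ ≤ agreement c S := by
  have hJl : J l = Hval G c θ l S :=
    (hJ l).unique (isGreatest_Hval_of_forall_le G c θ hS hopt)
  refine le_agreement_of_Hval_le G c θ hl ?_
  calc Hval G c θ lstar S ≤ J lstar := (hJ lstar).2 ⟨S, hS, rfl⟩
    _ ≤ J l := hmin l (hlstar.trans hl.le)
    _ = Hval G c θ l S := hJl

/-- If `λ*` minimizes the Lagrangian dual `J` over `[0, ∞)`, then for every `λ > λ*` every
nonempty maximizer of `H_λ` is feasible for Q-DISCO. -/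
theorem feasible_above_dual_minimizer {V : Type*} [Fintype V] [Nonempty V]
    (G : SimpleGraph V) (c : V → ℝ) (θ : ℝ) (J : ℝ → ℝ)
    (hJ : ∀ l : ℝ,
      IsGreatest {x : ℝ | ∃ S : Finset V, S.Nonempty ∧ x = Hval G c θ l S} (J l))
    (lstar : ℝ) (hlstar : 0 ≤ lstar) (hmin : ∀ μ : ℝ, 0 ≤ μ → J lstar ≤ J μ)
    (l : ℝ) (hl : lstar < l)
    (S : Finset V) (hS : S.Nonempty)
    (hopt : ∀ T : Finset V, T.Nonempty → Hval G c θ l T ≤ Hval G c θ l S) :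
    θ ≤ agreement c S :=
  feasible_above_dual_minimizer_general G c θ J hJ lstar hlstar hmin l hl S hS hopt
end

section
/- Let 0 ≤ λ < λ' be real numbers with J(λ) > J(λ'). Then every nonempty subset S ⊆ V that maximizes H_λ over all nonempty subsets satisfies c(S) < θ. (In particular, for any λ strictly below the least minimizer of the Lagrangian dual J, every optimal solution of the Lagrangian relaxation with parameter λ is infeasible for Q-DISCO.) -/
theorem Hval_monotone_of_le_agreement {V : Type*} (G : SimpleGraph V) (c : V → ℝ) (θ : ℝ)
    {S : Finset V} (h : θ ≤ agreement c S) : Monotone fun l => Hval G c θ l S :=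
  fun _ _ hll' => add_le_add_right (mul_le_mul_of_nonneg_right hll' (sub_nonneg.2 h)) _

theorem infeasible_below_dual_minimizer_general {V : Type*}
    (G : SimpleGraph V) (c : V → ℝ) (θ : ℝ) (J : ℝ → ℝ)
    (hJ : ∀ l : ℝ,
      IsGreatest {x : ℝ | ∃ S : Finset V, S.Nonempty ∧ x = Hval G c θ l S} (J l))
    (l l' : ℝ) (hll' : l < l') (hJl : J l' < J l)
    (S : Finset V) (hS : S.Nonempty)
    (hopt : ∀ T : Finset V, T.Nonempty → Hval G c θ l T ≤ Hval G c θ l S) :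
    agreement c S < θ := by
  by_contra! hfeas
  obtain ⟨⟨T, hT, hJT⟩, -⟩ := hJ l
  refine hJl.not_ge ?_
  calc J l = Hval G c θ l T := hJT
    _ ≤ Hval G c θ l S := hopt T hT
    _ ≤ Hval G c θ l' S := Hval_monotone_of_le_agreement G c θ hfeas hll'.le
    _ ≤ J l' := (hJ l').2 ⟨S, hS, rfl⟩

/-- If `0 ≤ λ < λ'` and `J(λ) > J(λ')`, then every nonempty maximizer of `H_λ` is
infeasible for Q-DISCO (its agreement is strictly below `θ`). In particular this holds for
any `λ` strictly below the least minimizer of the Lagrangian dual. -/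
theorem infeasible_below_dual_minimizer {V : Type*} [Fintype V] [Nonempty V]
    (G : SimpleGraph V) (c : V → ℝ) (θ : ℝ) (J : ℝ → ℝ)
    (hJ : ∀ l : ℝ,
      IsGreatest {x : ℝ | ∃ S : Finset V, S.Nonempty ∧ x = Hval G c θ l S} (J l))
    (l l' : ℝ) (hl : 0 ≤ l) (hll' : l < l') (hJl : J l' < J l)
    (S : Finset V) (hS : S.Nonempty)
    (hopt : ∀ T : Finset V, T.Nonempty → Hval G c θ l T ≤ Hval G c θ l S) :
    agreement c S < θ :=
  infeasible_below_dual_minimizer_general G c θ J hJ l l' hll' hJl S hS hopt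
end

section
/- Assume θ < max_{v∈V} c_v. Then the Lagrangian dual J attains its minimum over λ ∈ [0, ∞); moreover, letting λ* be the least minimizer (λ* = min{λ ≥ 0 : J(λ) ≤ J(μ) for all μ ≥ 0}), there exists a nonempty subset S* ⊆ V that maximizes H_{λ*} over all nonempty subsets and satisfies c(S*) ≥ θ. -/
open Filter Topology

theorem exists_nonneg_forall_le_of_tendsto_atTop {f : ℝ → ℝ} (hf : Continuous f)
    (hlim : Tendsto f atTop atTop) : ∃ x, 0 ≤ x ∧ ∀ y, 0 ≤ y → f x ≤ f y := by
  obtain ⟨x, hx⟩ := (hf.comp (continuous_norm (E := ℝ))).exists_forall_le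
    (hlim.comp tendsto_norm_cocompact_atTop)
  exact ⟨‖x‖, norm_nonneg x, fun y hy => by simpa [abs_of_nonneg hy] using hx y⟩

namespace UpperEnvelope

variable {ι : Type*} {P : ι → Prop} {a b : ι → ℝ} {J : ℝ → ℝ}

theorem le_of_isGreatest
    (hJ : ∀ l, IsGreatest {x | ∃ i, P i ∧ x = a i + l * b i} (J l)) {i : ι} (hi : P i) (l : ℝ) :
    a i + l * b i ≤ J l :=
  (hJ l).2 ⟨i, hi, rfl⟩

theorem lipschitzWith_of_isGreatest
    (hJ : ∀ l, IsGreatest {x | ∃ i, P i ∧ x = a i + l * b i} (J l)) {M : ℝ}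
    (hb : ∀ i, |b i| ≤ M) : LipschitzWith M.toNNReal J := by
  refine LipschitzWith.of_le_add_mul' M fun l m => ?_
  obtain ⟨i, hi, hJl⟩ := (hJ l).1
  have hslope : (l - m) * b i ≤ M * dist l m := calc
    (l - m) * b i ≤ |l - m| * |b i| := abs_mul (l - m) (b i) ▸ le_abs_self _
    _ ≤ |l - m| * M := by gcongr; exact hb i
    _ = M * dist l m := by rw [Real.dist_eq, mul_comm]
  linarith [le_of_isGreatest hJ hi m]

theorem tendsto_atTop_of_isGreatest
    (hJ : ∀ l, IsGreatest {x | ∃ i, P i ∧ x = a i + l * b i} (J l)) {i : ι} (hi : P i)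
    (hbi : 0 < b i) : Tendsto J atTop atTop :=
  tendsto_atTop_mono (le_of_isGreatest hJ hi)
    (tendsto_atTop_add_const_left _ _ (tendsto_id.atTop_mul_const hbi))

theorem exists_active_nonneg_slope [Finite ι]
    (hJ : ∀ l, IsGreatest {x | ∃ i, P i ∧ x = a i + l * b i} (J l)) {l₀ : ℝ}
    (hmin : ∀ l, l₀ < l → J l₀ ≤ J l) : ∃ i, P i ∧ a i + l₀ * b i = J l₀ ∧ 0 ≤ b i := by
  by_contra! hneg
  have hbelow : ∀ᶠ l in 𝓝[>] l₀, ∀ i, P i → a i + l * b i < J l₀ := by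
    refine eventually_all.2 fun i => ?_
    by_cases hi : P i
    · rcases (le_of_isGreatest hJ hi l₀).lt_or_eq with hlt | heq
      · have hcont : Continuous fun l => a i + l * b i := by fun_prop
        exact nhdsWithin_le_nhds
          ((hcont.continuousAt.eventually_lt continuousAt_const hlt).mono fun _ h _ => h)
      · filter_upwards [self_mem_nhdsWithin] with l (hl : l₀ < l) _
        nlinarith [hneg i hi heq]
    · exact Eventually.of_forall fun _ h => absurd h hi
  obtain ⟨l, hl, hl₀⟩ := (hbelow.and self_mem_nhdsWithin).exists
  obtain ⟨i, hi, hJl⟩ := (hJ l).1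
  linarith [hl i hi, hmin l hl₀]

end UpperEnvelope

open UpperEnvelope

theorem dual_minimum_attained_and_feasible_optimum_general {V : Type*} [Fintype V]
    (G : SimpleGraph V) (c : V → ℝ) (θ : ℝ)
    (hθ : ∃ v : V, θ < c v) (J : ℝ → ℝ)
    (hJ : ∀ l : ℝ,
      IsGreatest {x : ℝ | ∃ S : Finset V, S.Nonempty ∧ x = Hval G c θ l S} (J l)) :
    (∃ l : ℝ, 0 ≤ l ∧ ∀ μ : ℝ, 0 ≤ μ → J l ≤ J μ) ∧
    (∀ lstar : ℝ,
      IsLeast {l : ℝ | 0 ≤ l ∧ ∀ μ : ℝ, 0 ≤ μ → J l ≤ J μ} lstar →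
      ∃ S : Finset V, S.Nonempty ∧
        (∀ T : Finset V, T.Nonempty → Hval G c θ lstar T ≤ Hval G c θ lstar S) ∧
        θ ≤ agreement c S) := by
  obtain ⟨v, hv⟩ := hθ
  obtain ⟨M, hM⟩ := Finite.exists_le fun S : Finset V => |agreement c S - θ|
  have hsingleton : 0 < agreement c {v} - θ := by simpa [agreement] using hv
  refine ⟨exists_nonneg_forall_le_of_tendsto_atTop (lipschitzWith_of_isGreatest hJ hM).continuous
    (tendsto_atTop_of_isGreatest hJ (Finset.singleton_nonempty v) hsingleton), ?_⟩
  rintro lstar ⟨⟨hlstar, hmin⟩, -⟩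
  obtain ⟨S, hS, hSJ, hslope⟩ :=
    exists_active_nonneg_slope hJ fun l hl => hmin l (hlstar.trans hl.le)
  exact ⟨S, hS, fun T hT => (le_of_isGreatest hJ hT lstar).trans hSJ.ge, by linarith⟩

/-- If `θ < max_v c_v`, the Lagrangian dual `J` attains its minimum over `[0, ∞)`, and at the
least minimizer `λ*` there exists a nonempty maximizer of `H_{λ*}` that is feasible for
Q-DISCO. -/
theorem dual_minimum_attained_and_feasible_optimum {V : Type*} [Fintype V] [Nonempty V]
    (G : SimpleGraph V) (c : V → ℝ) (θ : ℝ)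
    (hθ : ∃ v : V, θ < c v) (J : ℝ → ℝ)
    (hJ : ∀ l : ℝ,
      IsGreatest {x : ℝ | ∃ S : Finset V, S.Nonempty ∧ x = Hval G c θ l S} (J l)) :
    (∃ l : ℝ, 0 ≤ l ∧ ∀ μ : ℝ, 0 ≤ μ → J l ≤ J μ) ∧
    (∀ lstar : ℝ,
      IsLeast {l : ℝ | 0 ≤ l ∧ ∀ μ : ℝ, 0 ≤ μ → J l ≤ J μ} lstar →
      ∃ S : Finset V, S.Nonempty ∧
        (∀ T : Finset V, T.Nonempty → Hval G c θ lstar T ≤ Hval G c θ lstar S) ∧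
        θ ≤ agreement c S) :=
  dual_minimum_attained_and_feasible_optimum_general G c θ hθ J hJ
end
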